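/- Let R ∈ (1/2, 1) and γ ∈ [0,1) with γ ≥ 2(1−R), and for each integer n ≥ 1 let Yₙ be the unique real number satisfying γ·Φ(Yₙ) + (1−γ)·Φ(√n·Yₙ) = R. Then Φ(Yₙ) → 1 − (1−R)/γ and Φ(√n·Yₙ) → 1 as n → ∞. -/

import Mathlib

open MeasureTheory ProbabilityTheory Real Filter
open scoped NNReal ENNReal Topology

/-- The cdf `Φ` of the standard normal distribution. -/
noncomputable def stdNormalCDF (x : ℝ) : ℝ := ProbabilityTheory.cdf (gaussianReal 0 1) x

lemma stdNormal_Iic_zero : (gaussianReal 0 1) (Set.Iic 0) = 1/2 := by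
  set μ := gaussianReal 0 1 with hμ
  have hmap : μ.map (fun x => (-1 : ℝ) * x) = μ := by
    rw [hμ, gaussianReal_map_const_mul]; norm_num
  have hIci : μ (Set.Ici 0) = μ (Set.Iic 0) := by
    have hpre : (fun x => (-1 : ℝ) * x) ⁻¹' (Set.Iic 0) = Set.Ici 0 := by
      ext x; simp
    calc μ (Set.Ici 0) = μ ((fun x => (-1:ℝ) * x) ⁻¹' (Set.Iic 0)) := by rw [hpre]
      _ = (μ.map (fun x => (-1:ℝ) * x)) (Set.Iic 0) :=
          (Measure.map_apply (by fun_prop) measurableSet_Iic).symm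
      _ = μ (Set.Iic 0) := by rw [hmap]
  have hatom : μ {(0:ℝ)} = 0 :=
    gaussianReal_absolutelyContinuous 0 one_ne_zero (measure_singleton 0)
  have hIoi : μ (Set.Ioi 0) = μ (Set.Ici 0) := by
    refine le_antisymm (measure_mono Set.Ioi_subset_Ici_self) ?_
    have : Set.Ici (0:ℝ) = {0} ∪ Set.Ioi 0 := by
      ext x
      simp [eq_comm, le_iff_eq_or_lt]
    calc μ (Set.Ici 0) = μ ({0} ∪ Set.Ioi 0) := by rw [this]
      _ ≤ μ {0} + μ (Set.Ioi 0) := measure_union_le _ _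
      _ = μ (Set.Ioi 0) := by rw [hatom, zero_add]
  have hcompl : μ (Set.Iic 0) + μ (Set.Ioi 0) = 1 := by
    have := measure_add_measure_compl (μ := μ) (measurableSet_Iic (a := (0:ℝ)))
    rwa [Set.compl_Iic, measure_univ] at this
  rw [hIoi, hIci] at hcompl
  have h2 : 2 * μ (Set.Iic 0) = 1 := by rw [two_mul]; exact hcompl
  rw [ENNReal.eq_div_iff (by norm_num) (by norm_num)]
  exact h2

lemma stdNormalCDF_zero : stdNormalCDF 0 = 1/2 := by
  rw [stdNormalCDF, cdf_eq_real, measureReal_def, stdNormal_Iic_zero]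
  simp [ENNReal.toReal_div]

lemma stdNormalCDF_le_one (x : ℝ) : stdNormalCDF x ≤ 1 := cdf_le_one _ _

lemma stdNormalCDF_mono : Monotone stdNormalCDF := fun _ _ h => monotone_cdf _ h

lemma stdNormalCDF_le_add (x : ℝ) (hx : 0 ≤ x) : stdNormalCDF x ≤ 1/2 + x := by
  set μ := gaussianReal 0 1 with hμ
  have hsplit : μ (Set.Iic x) = μ (Set.Iic 0) + μ (Set.Ioc 0 x) := by
    rw [← measure_union (Set.Iic_disjoint_Ioc le_rfl) measurableSet_Ioc,
      Set.Iic_union_Ioc_eq_Iic hx]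
  have hI : μ (Set.Ioc 0 x) = ENNReal.ofReal (∫ t in Set.Ioc 0 x, gaussianPDFReal 0 1 t) :=
    gaussianReal_apply_eq_integral 0 one_ne_zero _
  have hpdf_le : ∀ t ∈ Set.Ioc 0 x, gaussianPDFReal 0 1 t ≤ 1 := by
    intro t _
    rw [gaussianPDFReal]
    have h1 : (1:ℝ) ≤ √(2 * π * (1:ℝ≥0)) := by
      rw [show ((1:ℝ≥0):ℝ) = 1 by norm_num, mul_one]
      rw [show (1:ℝ) = √1 by simp]
      exact Real.sqrt_le_sqrt (by nlinarith [Real.pi_gt_three])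
    have h2 : rexp (-(t - 0)^2 / (2 * (1:ℝ≥0))) ≤ 1 := by
      rw [Real.exp_le_one_iff]
      apply div_nonpos_of_nonpos_of_nonneg
      · simpa using sq_nonneg (t - 0)
      · positivity
    calc (√(2 * π * (1:ℝ≥0)))⁻¹ * rexp (-(t - 0)^2 / (2 * (1:ℝ≥0)))
        ≤ 1 * 1 := mul_le_mul (by rw [inv_le_one_iff₀]; right; exact h1) h2 (by positivity)
          zero_le_one
      _ = 1 := one_mul 1
  have hint : (∫ t in Set.Ioc 0 x, gaussianPDFReal 0 1 t) ≤ x := by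
    calc (∫ t in Set.Ioc 0 x, gaussianPDFReal 0 1 t) ≤ ∫ _t in Set.Ioc 0 x, (1:ℝ) := by
          refine setIntegral_mono_on ((integrable_gaussianPDFReal 0 1).integrableOn)
            (integrableOn_const ?_) measurableSet_Ioc hpdf_le
          rw [Real.volume_Ioc]
          exact ENNReal.ofReal_ne_top
      _ = x := by
          rw [setIntegral_const, Real.volume_real_Ioc_of_le hx, smul_eq_mul, mul_one]
          ring
  have hfin : μ (Set.Iic 0) ≠ ⊤ := measure_ne_top _ _
  rw [stdNormalCDF, cdf_eq_real, measureReal_def, hsplit, ENNReal.toReal_add hfin (by rw [hI]; exact ENNReal.ofReal_ne_top)]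
  have : (μ (Set.Iic 0)).toReal = 1/2 := by rw [stdNormal_Iic_zero]; simp
  rw [this, hI, ENNReal.toReal_ofReal (setIntegral_nonneg measurableSet_Ioc
    (fun t _ => gaussianPDFReal_nonneg 0 1 t))]
  linarith

theorem tst : True := trivial

/-- **Theorem 5, over-mean case, `t/2 ≥ c - ν`.** For `R ∈ (1/2,1)` and
`γ ≥ 2(1-R)`, the solutions `Yₙ` of `γ Φ(Yₙ) + (1-γ) Φ(√n Yₙ) = R` satisfy
`Φ(Yₙ) → 1 - (1-R)/γ` and `Φ(√n Yₙ) → 1`. -/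
theorem limit_over_mean_above_cut
    (R γ : ℝ) (hR : R ∈ Set.Ioo (1 / 2 : ℝ) 1) (hγ : γ ∈ Set.Ico (0 : ℝ) 1)
    (hcut : 2 * (1 - R) ≤ γ) (Y : ℕ → ℝ)
    (hY : ∀ n : ℕ, 1 ≤ n →
      γ * stdNormalCDF (Y n) + (1 - γ) * stdNormalCDF (Real.sqrt n * Y n) = R) :
    Tendsto (fun n : ℕ => stdNormalCDF (Y n)) atTop (nhds (1 - (1 - R) / γ)) ∧
      Tendsto (fun n : ℕ => stdNormalCDF (Real.sqrt n * Y n)) atTop (nhds 1) := by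
  obtain ⟨hR1, hR2⟩ := hR
  obtain ⟨hγ0, hγ1⟩ := hγ
  have hγpos : 0 < γ := lt_of_lt_of_le (by linarith) hcut
  have h1γ : 0 < 1 - γ := by linarith
  have key : ∀ ε : ℝ, 0 < ε →
      ∀ᶠ n : ℕ in atTop, 1 - ε ≤ stdNormalCDF (Real.sqrt n * Y n) := by
    intro ε hε
    obtain ⟨M0, hM0⟩ : ∃ M : ℝ, 1 - ε ≤ stdNormalCDF M :=
      ((tendsto_cdf_atTop (gaussianReal 0 1)).eventually
        (eventually_ge_nhds (by linarith : (1:ℝ) - ε < 1))).exists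
    set M := max M0 0 with hMdef
    have hM : 0 ≤ M := le_max_right _ _
    have hMcdf : 1 - ε ≤ stdNormalCDF M :=
      le_trans hM0 (stdNormalCDF_mono (le_max_left _ _))
    have hsq : Tendsto (fun n : ℕ => Real.sqrt n) atTop atTop := by
      refine tendsto_atTop_atTop.2 fun b => ⟨⌈b^2⌉₊, fun n hn => ?_⟩
      have hb : (b^2 : ℝ) ≤ n := le_trans (Nat.le_ceil _) (by exact_mod_cast hn)
      calc b ≤ |b| := le_abs_self b
        _ = Real.sqrt (b^2) := (Real.sqrt_sq_eq_abs b).symm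
        _ ≤ Real.sqrt n := Real.sqrt_le_sqrt hb
    have hdiv0 : Tendsto (fun n : ℕ => M / Real.sqrt n) atTop (𝓝 0) :=
      Tendsto.div_atTop tendsto_const_nhds hsq
    have hlim : Tendsto (fun n : ℕ => stdNormalCDF (M / Real.sqrt n)) atTop (𝓝 (1/2)) := by
      apply tendsto_of_tendsto_of_tendsto_of_le_of_le (g := fun _ : ℕ => (1/2 : ℝ))
        (h := fun n : ℕ => 1/2 + M / Real.sqrt n)
      · exact tendsto_const_nhds
      · have h12 : Tendsto (fun _ : ℕ => (1/2 : ℝ)) atTop (𝓝 (1/2)) := tendsto_const_nhds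
        simpa using h12.add hdiv0
      · intro n
        have : (0:ℝ) ≤ M / Real.sqrt n := by positivity
        calc (1/2 : ℝ) = stdNormalCDF 0 := stdNormalCDF_zero.symm
          _ ≤ _ := stdNormalCDF_mono this
      · intro n
        exact stdNormalCDF_le_add _ (by positivity)
    have L : (1:ℝ) ≤ (R - γ * (1/2)) / (1 - γ) := by
      rw [le_div_iff₀ h1γ]; linarith
    have hh : Tendsto (fun n : ℕ => (R - γ * stdNormalCDF (M / Real.sqrt n)) / (1 - γ)) atTop
        (𝓝 ((R - γ * (1/2)) / (1 - γ))) :=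
      (tendsto_const_nhds.sub (hlim.const_mul γ)).div_const _
    have hev : ∀ᶠ n : ℕ in atTop,
        1 - ε < (R - γ * stdNormalCDF (M / Real.sqrt n)) / (1 - γ) :=
      hh.eventually (eventually_gt_nhds (by linarith))
    filter_upwards [hev, eventually_ge_atTop 1] with n hn hn1
    by_cases hc : M ≤ Real.sqrt n * Y n
    · exact le_trans hMcdf (stdNormalCDF_mono hc)
    · push_neg at hc
      have hs : (0:ℝ) < Real.sqrt n := Real.sqrt_pos.2 (by exact_mod_cast hn1)
      have hYle : Y n ≤ M / Real.sqrt n := by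
        rw [le_div_iff₀ hs]; nlinarith
      have hΦle : stdNormalCDF (Y n) ≤ stdNormalCDF (M / Real.sqrt n) := stdNormalCDF_mono hYle
      have heq := hY n hn1
      have hrep : stdNormalCDF (Real.sqrt n * Y n) = (R - γ * stdNormalCDF (Y n)) / (1 - γ) := by
        field_simp
        linarith
      rw [hrep]
      have hmono : (R - γ * stdNormalCDF (M / Real.sqrt n)) / (1 - γ)
          ≤ (R - γ * stdNormalCDF (Y n)) / (1 - γ) := by
        gcongr
      linarith
  have hψ : Tendsto (fun n : ℕ => stdNormalCDF (Real.sqrt n * Y n)) atTop (𝓝 1) := by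
    refine tendsto_order.2 ⟨fun a ha => ?_, fun a ha => ?_⟩
    · filter_upwards [key ((1 - a)/2) (by linarith)] with n h
      linarith
    · filter_upwards with n
      have := stdNormalCDF_le_one (Real.sqrt n * Y n)
      linarith
  refine ⟨?_, hψ⟩
  have h2 : Tendsto (fun n : ℕ => (R - (1 - γ) * stdNormalCDF (Real.sqrt n * Y n)) / γ) atTop
      (𝓝 ((R - (1 - γ) * 1) / γ)) :=
    (tendsto_const_nhds.sub (hψ.const_mul _)).div_const _
  have heqv : (R - (1 - γ) * 1) / γ = 1 - (1 - R) / γ := by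
    field_simp
    ring
  rw [← heqv]
  refine h2.congr' ?_
  filter_upwards [eventually_ge_atTop 1] with n hn
  have := hY n hn
  field_simp
  linarith
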